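/- arXiv:1504.04429 — 3 statements merged into one kernel-verified Lean document; each statement's English description precedes it below -/
import Mathlib

section
/- For any POVM (π_y) on ℂ^d, the informational power satisfies W(π) = sup_ρ A((ρ^{1/2} π_y ρ^{1/2})_y), where the supremum is over all density matrices ρ (positive semidefinite d×d complex matrices of trace 1); note that for any density matrix ρ, the family (ρ^{1/2} π_y ρ^{1/2})_y is an ensemble. -/
open MeasureTheory Matrix Finset Filter
open scoped ComplexOrder

noncomputable section

/-- The `k`-fold Kronecker tensor power of a `d × d` matrix, acting on `(ℂ^d)^{⊗k}`
(indexed by functions `Fin k → Fin d`). -/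
def matTensorPow {d : ℕ} (M : Matrix (Fin d) (Fin d) ℂ) (k : ℕ) :
    Matrix (Fin k → Fin d) (Fin k → Fin d) ℂ :=
  Matrix.of fun f g => ∏ i, M (f i) (g i)

/-- The orthogonal projection onto the symmetric subspace of `(ℂ^d)^{⊗k}`,
written as the average of the permutation operators. -/
def symProj (k d : ℕ) : Matrix (Fin k → Fin d) (Fin k → Fin d) ℂ :=
  ((Nat.factorial k : ℂ))⁻¹ •
    ∑ σ : Equiv.Perm (Fin k),
      Matrix.of fun f g => if (∀ i, f (σ i) = g i) then (1 : ℂ) else 0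

/-- A (finite) POVM on `ℂ^d`: positive semidefinite effects summing to the identity. -/
def IsPOVM {d m : ℕ} (π : Fin m → Matrix (Fin d) (Fin d) ℂ) : Prop :=
  (∀ y, (π y).PosSemidef) ∧ ∑ y, π y = 1

/-- A spherical quantum `t`-design POVM on `ℂ^d`. -/
def IsTDesignPOVM {d m : ℕ} (t : ℕ) (π : Fin m → Matrix (Fin d) (Fin d) ℂ) : Prop :=
  IsPOVM π ∧ (∀ y, π y ≠ 0) ∧
    ∀ k, 1 ≤ k → k ≤ t →
      ((d : ℂ))⁻¹ • ∑ y, (((π y).trace) ^ (k - 1))⁻¹ • matTensorPow (π y) k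
        = ((Nat.choose (d - 1 + k) k : ℂ))⁻¹ • symProj k d

/-- A (finite) ensemble on `ℂ^d`: positive semidefinite matrices with unit total trace. -/
def IsEnsemble {d n : ℕ} (ρ : Fin n → Matrix (Fin d) (Fin d) ℂ) : Prop :=
  (∀ x, (ρ x).PosSemidef) ∧ ∑ x, (ρ x).trace = 1

/-- The mutual information (in nats) of the joint distribution
`p_{x,y} = Tr(ρ_x π_y)`; terms with `p_{x,y} = 0` vanish. -/
def mutualInfo {d n m : ℕ} (ρ : Fin n → Matrix (Fin d) (Fin d) ℂ)
    (π : Fin m → Matrix (Fin d) (Fin d) ℂ) : ℝ :=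
  ∑ x, ∑ y,
    ((ρ x * π y).trace).re *
      Real.log (((ρ x * π y).trace).re /
        (((ρ x).trace).re * ∑ x', ((ρ x' * π y).trace).re))

/-- The informational power of a POVM: the supremum of the mutual information
over all (finite) ensembles. -/
def infoPower {d m : ℕ} (π : Fin m → Matrix (Fin d) (Fin d) ℂ) : ℝ :=
  sSup {w | ∃ (n : ℕ) (ρ : Fin n → Matrix (Fin d) (Fin d) ℂ),
    IsEnsemble ρ ∧ w = mutualInfo ρ π}

/-- The accessible information of an ensemble: the supremum of the mutual
information over all (finite) POVMs. -/
def accInfo {d n : ℕ} (ρ : Fin n → Matrix (Fin d) (Fin d) ℂ) : ℝ :=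
  sSup {w | ∃ (m : ℕ) (π : Fin m → Matrix (Fin d) (Fin d) ℂ),
    IsPOVM π ∧ w = mutualInfo ρ π}

/-- `η(u) = -u ln u` (with `η(0) = 0`). -/
def etaFn (u : ℝ) : ℝ := -u * Real.log u
/-- The positive semidefinite square root of a positive semidefinite matrix, with the
definition `Matrix.PosSemidef.sqrt` had in the older Mathlib (since removed). -/
def Matrix.PosSemidef.sqrt {n 𝕜 : Type*} [Fintype n] [DecidableEq n] [RCLike 𝕜]
    {A : Matrix n n 𝕜} (hA : A.PosSemidef) : Matrix n n 𝕜 :=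
  hA.1.eigenvectorUnitary.1 * diagonal ((↑) ∘ (Real.sqrt ∘ hA.1.eigenvalues)) *
    (star hA.1.eigenvectorUnitary : Matrix n n 𝕜)

/-!
Both sides are suprema of the same set of joint distributions, because the mutual information
depends only on `p_{x,y}` and is symmetric under exchanging the roles of `x` and `y`.
If `ρ` is a density matrix and `(M_x)` a POVM, then `Tr((√ρ π_y √ρ) M_x) = Tr((√ρ M_x √ρ) π_y)`
by cyclicity of the trace, and `(√ρ M_x √ρ)_x` is an ensemble, so `W(π)` dominates the right-hand
side. Conversely, an ensemble `(ρ_x)` with average `ρ̄ = ∑ ρ_x` is recovered from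
`σ_y = √ρ̄ π_y √ρ̄` by the pretty good measurement `M_x = ρ̄^{-1/2} ρ_x ρ̄^{-1/2}` (pseudo-inverse,
completed by the projection onto `ker ρ̄`): since `ρ_x ≤ ρ̄`, each `ρ_x` lives on the support of
`ρ̄`, and `Tr(σ_y M_x) = Tr(ρ_x π_y)`.
-/

open scoped MatrixOrder

lemma Real.sub_le_mul_log_div {p q : ℝ} (hp : 0 ≤ p) (hq : 0 < q) :
    p - q ≤ p * Real.log (p / q) := by
  have := Real.self_sub_one_le_mul_log (div_nonneg hp hq.le)
  rw [div_sub_one hq.ne', div_mul_eq_mul_div, div_le_div_iff_of_pos_right hq] at this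
  exact this

section JointMutualInfo

variable {α β : Type*} [Fintype α] [Fintype β]

def jointMutualInfo (p : α → β → ℝ) : ℝ :=
  ∑ x, ∑ y, p x y * Real.log (p x y / ((∑ y', p x y') * ∑ x', p x' y))

lemma jointMutualInfo_swap (p : α → β → ℝ) :
    jointMutualInfo (Function.swap p) = jointMutualInfo p := by
  rw [jointMutualInfo, jointMutualInfo, Finset.sum_comm]
  simp only [Function.swap, mul_comm (∑ x', p x' _)]

variable {p : α → β → ℝ}

lemma jointMutualInfo_nonneg (hp : ∀ x y, 0 ≤ p x y) (hp₁ : ∑ x, ∑ y, p x y = 1) :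
    0 ≤ jointMutualInfo p := by
  have hterm : ∀ x y, p x y - (∑ y', p x y') * ∑ x', p x' y ≤
      p x y * Real.log (p x y / ((∑ y', p x y') * ∑ x', p x' y)) := by
    intro x y
    rcases (hp x y).eq_or_lt with h0 | hpos
    · rw [← h0, zero_sub, zero_mul, neg_nonpos]
      exact mul_nonneg (sum_nonneg fun y' _ => hp x y') (sum_nonneg fun x' _ => hp x' y)
    · refine Real.sub_le_mul_log_div hpos.le (mul_pos ?_ ?_)
      · exact hpos.trans_le (single_le_sum (fun y' _ => hp x y') (mem_univ y))
      · exact hpos.trans_le (single_le_sum (fun x' _ => hp x' y) (mem_univ x))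
  calc (0 : ℝ) = ∑ x, ∑ y, p x y - (∑ x, ∑ y, p x y) * ∑ y, ∑ x, p x y := by
        rw [show ∑ y, ∑ x, p x y = 1 from sum_comm.trans hp₁, hp₁]; norm_num
    _ = ∑ x, ∑ y, (p x y - (∑ y', p x y') * ∑ x', p x' y) := by
        simp only [sum_sub_distrib, sum_mul_sum]
    _ ≤ jointMutualInfo p := sum_le_sum fun x _ => sum_le_sum fun y _ => hterm x y

lemma jointMutualInfo_le_card_left (hp : ∀ x y, 0 ≤ p x y) :
    jointMutualInfo p ≤ Fintype.card α := by
  have hterm : ∀ x y, p x y * Real.log (p x y / ((∑ y', p x y') * ∑ x', p x' y)) ≤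
      -p x y * Real.log (∑ y', p x y') := by
    intro x y
    rcases (hp x y).eq_or_lt with h0 | hpos
    · rw [← h0]; simp
    have hrow := single_le_sum (fun y' _ => hp x y') (mem_univ y)
    have hcol := single_le_sum (fun x' _ => hp x' y) (mem_univ x)
    rw [Real.log_div hpos.ne' (mul_pos (hpos.trans_le hrow) (hpos.trans_le hcol)).ne',
      Real.log_mul (hpos.trans_le hrow).ne' (hpos.trans_le hcol).ne', neg_mul, ← mul_neg]
    have := Real.log_le_log hpos hcol
    gcongr
    linarith
  calc jointMutualInfo p ≤ ∑ x, ∑ y, -p x y * Real.log (∑ y', p x y') :=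
        sum_le_sum fun x _ => sum_le_sum fun y _ => hterm x y
    _ = ∑ x, Real.negMulLog (∑ y, p x y) := by
        simp only [← sum_mul, sum_neg_distrib, Real.negMulLog]
    _ ≤ ∑ _x : α, (1 : ℝ) := sum_le_sum fun x _ =>
        (Real.negMulLog_le_one_sub_self (sum_nonneg fun y _ => hp x y)).trans
          (sub_le_self _ (sum_nonneg fun y _ => hp x y))
    _ = Fintype.card α := by simp

lemma jointMutualInfo_le_card_right (hp : ∀ x y, 0 ≤ p x y) :
    jointMutualInfo p ≤ Fintype.card β := by
  rw [← jointMutualInfo_swap]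
  exact jointMutualInfo_le_card_left fun y x => hp x y

end JointMutualInfo

namespace Matrix

variable {n 𝕜 : Type*} [Fintype n] [DecidableEq n] [RCLike 𝕜]

lemma PosSemidef.sqrt_eq_cfcSqrt {A : Matrix n n 𝕜} (hA : A.PosSemidef) :
    hA.sqrt = CFC.sqrt A := by
  rw [CFC.sqrt_eq_real_sqrt A hA.nonneg, cfcₙ_eq_cfc, hA.1.cfc_eq, IsHermitian.cfc,
    Unitary.conjStarAlgAut_apply]
  rfl

lemma PosSemidef.trace_mul_nonneg {A B : Matrix n n 𝕜} (hA : A.PosSemidef) (hB : B.PosSemidef) :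
    0 ≤ (A * B).trace := by
  obtain ⟨C, rfl⟩ := CStarAlgebra.nonneg_iff_eq_star_mul_self.mp hB.nonneg
  rw [← mul_assoc, trace_mul_comm, ← mul_assoc]
  exact (star_right_conjugate_nonneg hA.nonneg C).posSemidef.trace_nonneg

lemma mul_eq_zero_of_le_of_mul_eq_zero {A B Q : Matrix n n 𝕜} (hA : 0 ≤ A) (hAB : A ≤ B)
    (hQ : IsSelfAdjoint Q) (hBQ : B * Q = 0) : A * Q = 0 := by
  have hQAQ : Q * A * Q = 0 := le_antisymm
    (by simpa only [mul_assoc, hBQ, mul_zero] using hQ.conjugate_le_conjugate hAB)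
    (hQ.conjugate_nonneg hA)
  obtain ⟨C, rfl⟩ := CStarAlgebra.nonneg_iff_eq_star_mul_self.mp hA
  have hCQ : C * Q = 0 := by
    rw [← conjTranspose_mul_self_eq_zero, ← hQAQ, ← star_eq_conjTranspose, star_mul, hQ.star_eq]
    simp only [mul_assoc]
  rw [mul_assoc, hCQ, mul_zero]

lemma exists_pseudoInverse {T : Matrix n n 𝕜} (hT : 0 ≤ T) :
    ∃ S, 0 ≤ S ∧ Commute T S ∧ T * S * T = T ∧ T * S ≤ 1 := by
  have hcont (f : ℝ → ℝ) : ContinuousOn f (spectrum ℝ T) := T.finite_real_spectrum.continuousOn f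
  refine ⟨cfc (·⁻¹ : ℝ → ℝ) T,
    cfc_nonneg fun t ht => inv_nonneg.mpr (spectrum_nonneg_of_nonneg hT ht), ?_, ?_, ?_⟩
  · simpa only [cfc_id ℝ T] using cfc_commute_cfc id (·⁻¹ : ℝ → ℝ) T
  · calc T * cfc (·⁻¹) T * T = cfc (fun t : ℝ => t * t⁻¹ * t) T := by
          rw [cfc_mul _ _ T (hcont _) (hcont _), cfc_mul _ _ T (hcont _) (hcont _), cfc_id' ℝ T]
      _ = T := by simp only [mul_inv_mul_cancel, cfc_id' ℝ T]
  · calc T * cfc (·⁻¹) T = cfc (fun t : ℝ => t * t⁻¹) T := by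
          rw [cfc_mul _ _ T (hcont _) (hcont _), cfc_id' ℝ T]
      _ ≤ 1 := cfc_le_one _ T fun t _ => by
          rcases eq_or_ne t 0 with rfl | ht
          · simp
          · rw [mul_inv_cancel₀ ht]

lemma mul_mul_mul_eq_self_of_le_mul_self {A T S : Matrix n n 𝕜} (hA : 0 ≤ A) (hAT : A ≤ T * T)
    (hT : IsSelfAdjoint T) (hS : IsSelfAdjoint S) (hTS : Commute T S) (hTST : T * S * T = T) :
    T * S * A * (T * S) = A := by
  have hP : IsSelfAdjoint (T * S) := by
    rw [IsSelfAdjoint, star_mul, hS.star_eq, hT.star_eq, hTS.eq]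
  have hAP : A * (T * S) = A := by
    have hTP : T * (T * S) = T := by rw [hTS.eq, ← mul_assoc, hTST]
    have := mul_eq_zero_of_le_of_mul_eq_zero hA hAT (.sub (.one _) hP)
      (by rw [mul_sub, mul_one, mul_assoc, hTP, sub_self])
    rwa [mul_sub, mul_one, sub_eq_zero, eq_comm] at this
  have hPA : T * S * A = A := by
    simpa only [star_mul, hP.star_eq, hA.isSelfAdjoint.star_eq] using congrArg star hAP
  rw [hPA, hAP]

end Matrix

def jointProb {d n m : ℕ} (ρ : Fin n → Matrix (Fin d) (Fin d) ℂ)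
    (π : Fin m → Matrix (Fin d) (Fin d) ℂ) (x : Fin n) (y : Fin m) : ℝ :=
  ((ρ x * π y).trace).re

section MutualInfo

variable {d n m : ℕ} {ρ : Fin n → Matrix (Fin d) (Fin d) ℂ}
  {π : Fin m → Matrix (Fin d) (Fin d) ℂ}

lemma sum_jointProb_right (hπ : ∑ y, π y = 1) (x : Fin n) :
    ∑ y, jointProb ρ π x y = ((ρ x).trace).re := by
  simp only [jointProb, ← Complex.re_sum, ← trace_sum, ← mul_sum, hπ, mul_one]

lemma mutualInfo_eq_jointMutualInfo (hπ : ∑ y, π y = 1) :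
    mutualInfo ρ π = jointMutualInfo (jointProb ρ π) := by
  simp only [jointMutualInfo, sum_jointProb_right hπ]
  rfl

lemma jointProb_nonneg (hρ : IsEnsemble ρ) (hπ : IsPOVM π) (x : Fin n) (y : Fin m) :
    0 ≤ jointProb ρ π x y :=
  (Complex.nonneg_iff.mp ((hρ.1 x).trace_mul_nonneg (hπ.1 y))).1

lemma sum_sum_jointProb (hρ : IsEnsemble ρ) (hπ : IsPOVM π) :
    ∑ x, ∑ y, jointProb ρ π x y = 1 := by
  simp only [sum_jointProb_right hπ.2, ← Complex.re_sum, hρ.2, Complex.one_re]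

lemma mutualInfo_nonneg (hρ : IsEnsemble ρ) (hπ : IsPOVM π) : 0 ≤ mutualInfo ρ π := by
  rw [mutualInfo_eq_jointMutualInfo hπ.2]
  exact jointMutualInfo_nonneg (jointProb_nonneg hρ hπ) (sum_sum_jointProb hρ hπ)

lemma mutualInfo_le_card_left (hρ : IsEnsemble ρ) (hπ : IsPOVM π) : mutualInfo ρ π ≤ n := by
  rw [mutualInfo_eq_jointMutualInfo hπ.2]
  simpa using jointMutualInfo_le_card_left (jointProb_nonneg hρ hπ)

lemma mutualInfo_le_card_right (hρ : IsEnsemble ρ) (hπ : IsPOVM π) : mutualInfo ρ π ≤ m := by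
  rw [mutualInfo_eq_jointMutualInfo hπ.2]
  simpa using jointMutualInfo_le_card_right (jointProb_nonneg hρ hπ)

lemma mutualInfo_le_infoPower (hρ : IsEnsemble ρ) (hπ : IsPOVM π) :
    mutualInfo ρ π ≤ infoPower π := by
  refine le_csSup ⟨m, ?_⟩ ⟨n, ρ, hρ, rfl⟩
  rintro _ ⟨k, ρ', hρ', rfl⟩
  exact mutualInfo_le_card_right hρ' hπ

lemma infoPower_nonneg (hπ : IsPOVM π) : 0 ≤ infoPower π :=
  Real.sSup_nonneg <| by
    rintro _ ⟨k, ρ, hρ, rfl⟩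
    exact mutualInfo_nonneg hρ hπ

lemma mutualInfo_le_accInfo (hρ : IsEnsemble ρ) (hπ : IsPOVM π) :
    mutualInfo ρ π ≤ accInfo ρ := by
  refine le_csSup ⟨n, ?_⟩ ⟨m, π, hπ, rfl⟩
  rintro _ ⟨k, π', hπ', rfl⟩
  exact mutualInfo_le_card_left hρ hπ'

lemma accInfo_nonneg (hρ : IsEnsemble ρ) : 0 ≤ accInfo ρ :=
  Real.sSup_nonneg <| by
    rintro _ ⟨k, π, hπ, rfl⟩
    exact mutualInfo_nonneg hρ hπ

lemma mutualInfo_eq_of_jointProb_eq_swap {σ : Fin m → Matrix (Fin d) (Fin d) ℂ}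
    {M : Fin n → Matrix (Fin d) (Fin d) ℂ} (hπ : ∑ y, π y = 1) (hM : ∑ x, M x = 1)
    (h : jointProb σ M = Function.swap (jointProb ρ π)) :
    mutualInfo σ M = mutualInfo ρ π := by
  rw [mutualInfo_eq_jointMutualInfo hM, h, jointMutualInfo_swap,
    mutualInfo_eq_jointMutualInfo hπ]

end MutualInfo

section Duality

variable {d n m : ℕ} {π : Fin m → Matrix (Fin d) (Fin d) ℂ}

lemma IsPOVM.isEnsemble_conj_sqrt (hπ : IsPOVM π) {ρ : Matrix (Fin d) (Fin d) ℂ}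
    (hρ : ρ.PosSemidef) (htr : ρ.trace = 1) :
    IsEnsemble (fun y => CFC.sqrt ρ * π y * CFC.sqrt ρ) := by
  refine ⟨fun y =>
    (conjugate_nonneg_of_nonneg (hπ.1 y).nonneg (CFC.sqrt_nonneg ρ)).posSemidef, ?_⟩
  rw [← trace_sum, ← sum_mul, ← mul_sum, hπ.2, mul_one, CFC.sqrt_mul_sqrt_self ρ hρ.nonneg, htr]

lemma jointProb_conj_eq_swap (B : Matrix (Fin d) (Fin d) ℂ)
    (M : Fin n → Matrix (Fin d) (Fin d) ℂ) :
    jointProb (fun y => B * π y * B) M = Function.swap (jointProb (fun x => B * M x * B) π) := by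
  ext y x
  simp only [jointProb, Function.swap]
  rw [trace_mul_comm, ← mul_assoc, trace_mul_cycle]
  simp only [mul_assoc]

lemma accInfo_conj_sqrt_le_infoPower (hπ : IsPOVM π) {ρ : Matrix (Fin d) (Fin d) ℂ}
    (hρ : ρ.PosSemidef) (htr : ρ.trace = 1) :
    accInfo (fun y => CFC.sqrt ρ * π y * CFC.sqrt ρ) ≤ infoPower π := by
  refine Real.sSup_le ?_ (infoPower_nonneg hπ)
  rintro _ ⟨k, M, hM, rfl⟩
  rw [mutualInfo_eq_of_jointProb_eq_swap hπ.2 hM.2 (jointProb_conj_eq_swap _ M)]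
  exact mutualInfo_le_infoPower (hM.isEnsemble_conj_sqrt hρ htr) hπ

lemma exists_isPOVM_trace_conj_sqrt_mul [NeZero n]
    {ρ : Fin n → Matrix (Fin d) (Fin d) ℂ} (hρ : ∀ x, (ρ x).PosSemidef) :
    ∃ M : Fin n → Matrix (Fin d) (Fin d) ℂ, IsPOVM M ∧ ∀ x X,
      (CFC.sqrt (∑ x, ρ x) * X * CFC.sqrt (∑ x, ρ x) * M x).trace = (ρ x * X).trace := by
  have hT : 0 ≤ CFC.sqrt (∑ x, ρ x) := CFC.sqrt_nonneg _
  have hTT : CFC.sqrt (∑ x, ρ x) * CFC.sqrt (∑ x, ρ x) = ∑ x, ρ x :=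
    CFC.sqrt_mul_sqrt_self _ (sum_nonneg fun x _ => (hρ x).nonneg)
  set T := CFC.sqrt (∑ x, ρ x)
  obtain ⟨S, hS, hTS, hTST, hTS_le⟩ := exists_pseudoInverse hT
  refine ⟨fun x => S * ρ x * S + if x = 0 then 1 - T * S else 0, ⟨fun x => ?_, ?_⟩,
    fun x X => ?_⟩
  · refine (add_nonneg (conjugate_nonneg_of_nonneg (hρ x).nonneg hS) ?_).posSemidef
    split_ifs
    exacts [sub_nonneg.mpr hTS_le, le_rfl]
  · have hSρS : S * (∑ x, ρ x) * S = T * S := by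
      rw [← hTT, show S * (T * T) * S = S * T * (T * S) by simp only [mul_assoc], ← hTS.eq,
        ← mul_assoc, hTST]
    rw [sum_add_distrib, ← sum_mul, ← mul_sum, hSρS, sum_ite_eq' univ (0 : Fin n),
      if_pos (mem_univ _), add_sub_cancel]
  · have hsupp : (T * X * T * (S * ρ x * S)).trace = (ρ x * X).trace :=
      calc (T * X * T * (S * ρ x * S)).trace = (T * S * ρ x * (S * T) * X).trace := by
            rw [trace_mul_comm, show S * ρ x * S * (T * X * T) = S * ρ x * (S * T) * X * T by
              simp only [mul_assoc], trace_mul_comm]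
            simp only [mul_assoc]
        _ = (ρ x * X).trace := by
            rw [← hTS.eq, mul_mul_mul_eq_self_of_le_mul_self (hρ x).nonneg
              (hTT ▸ single_le_sum (fun x _ => (hρ x).nonneg) (mem_univ x)) hT.isSelfAdjoint
              hS.isSelfAdjoint hTS hTST]
    have hker : T * X * T * (1 - T * S) = 0 := by
      rw [mul_sub, mul_one, mul_assoc _ T, hTS.eq, ← mul_assoc T S T, hTST, sub_self]
    dsimp only
    split_ifs
    · rw [mul_add, trace_add, hsupp, hker, trace_zero, add_zero]
    · rw [add_zero, hsupp]

lemma mutualInfo_le_accInfo_conj_sqrt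
    {ρ : Fin n → Matrix (Fin d) (Fin d) ℂ} (hπ : IsPOVM π) (hρ : IsEnsemble ρ) :
    mutualInfo ρ π ≤
      accInfo (fun y => CFC.sqrt (∑ x, ρ x) * π y * CFC.sqrt (∑ x, ρ x)) := by
  have : NeZero n := ⟨by rintro rfl; simpa using hρ.2⟩
  obtain ⟨M, hM, hMtr⟩ := exists_isPOVM_trace_conj_sqrt_mul hρ.1
  have hσ := hπ.isEnsemble_conj_sqrt (posSemidef_sum univ fun x _ => hρ.1 x)
    (by rw [trace_sum, hρ.2])
  have hjoint : jointProb (fun y => CFC.sqrt (∑ x, ρ x) * π y * CFC.sqrt (∑ x, ρ x)) M =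
      Function.swap (jointProb ρ π) :=
    funext₂ fun y x => congrArg Complex.re (hMtr x (π y))
  rw [← mutualInfo_eq_of_jointProb_eq_swap hπ.2 hM.2 hjoint]
  exact mutualInfo_le_accInfo hσ hM

end Duality

/-- duality between informational power and accessible information:
`W(π) = sup_ρ A((ρ^{1/2} π_y ρ^{1/2})_y)`, the supremum over density matrices `ρ`. -/
theorem infoPower_eq_sup_accInfo
    {d m : ℕ} (π : Fin m → Matrix (Fin d) (Fin d) ℂ) (hπ : IsPOVM π) :
    infoPower π
      = sSup {w : ℝ | ∃ (ρ : Matrix (Fin d) (Fin d) ℂ) (h : ρ.PosSemidef),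
          ρ.trace = 1 ∧ w = accInfo (fun y => h.sqrt * π y * h.sqrt)} := by
  simp only [Matrix.PosSemidef.sqrt_eq_cfcSqrt]
  have hbdd : BddAbove {w : ℝ | ∃ (ρ : Matrix (Fin d) (Fin d) ℂ) (_ : ρ.PosSemidef),
      ρ.trace = 1 ∧ w = accInfo (fun y => CFC.sqrt ρ * π y * CFC.sqrt ρ)} := by
    refine ⟨infoPower π, ?_⟩
    rintro _ ⟨ρ, hρ, htr, rfl⟩
    exact accInfo_conj_sqrt_le_infoPower hπ hρ htr
  refine le_antisymm (Real.sSup_le ?_ (Real.sSup_nonneg ?_))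
    (Real.sSup_le ?_ (infoPower_nonneg hπ))
  · rintro _ ⟨n, ρ, hρ, rfl⟩
    exact (mutualInfo_le_accInfo_conj_sqrt hπ hρ).trans (le_csSup hbdd
      ⟨_, posSemidef_sum univ fun x _ => hρ.1 x, by rw [trace_sum, hρ.2], rfl⟩)
  · rintro _ ⟨ρ, hρ, htr, rfl⟩
    exact accInfo_nonneg (hπ.isEnsemble_conj_sqrt hρ htr)
  · rintro _ ⟨ρ, hρ, htr, rfl⟩
    exact accInfo_conj_sqrt_le_infoPower hπ hρ htr
end
end

section
/- Let (π_y) be a 2-design POVM on ℂ^d. Then for every ensemble (ρ_x), the mutual information satisfies I(ρ; π) ≤ W_2(d) := ln(2d/(d+1)); hence the informational power of (π_y) is at most ln(2d/(d+1)). -/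
open MeasureTheory Matrix Finset Filter
open scoped ComplexOrder

noncomputable section

/-!
Write `p_{xy} = Tr(ρ_x π_y)`, with marginals `p_x = Tr ρ_x` and `q_y`, and let `u_y = Tr(π_y) / d`,
a probability vector. Pairing the 2-design identity with `ρ_x ⊗ ρ_x` gives
`∑_y p_{xy}² / u_y = d ((Tr ρ_x)² + Tr ρ_x²) / (d + 1) ≤ C p_x²` with `C = 2d / (d + 1)`,
since `Tr ρ² ≤ (Tr ρ)²` for `ρ ≥ 0`. Then `I ≤ ln C` follows from `ln t ≤ t - 1` applied to the
first and last factors of `p_{xy} / (p_x q_y) = (p_{xy} / (C p_x u_y)) · C · (u_y / q_y)`.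
-/

lemma Real.mul_log_div_mul_le {a b c u C : ℝ} (ha : 0 ≤ a) (hab : a ≤ b) (hac : a ≤ c)
    (hu : 0 < u) (hC : 0 < C) :
    a * Real.log (a / (b * c)) ≤ a * Real.log C + a ^ 2 / (b * u * C) - 2 * a + a * u / c := by
  rcases ha.eq_or_lt with rfl | ha
  · simp
  have hb : 0 < b := ha.trans_le hab
  have hc : 0 < c := ha.trans_le hac
  have hsplit : a / (b * c) = a / (b * u * C) * C * (u / c) := by field_simp
  have h1 := Real.log_le_sub_one_of_pos (show 0 < a / (b * u * C) by positivity)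
  have h2 := Real.log_le_sub_one_of_pos (show 0 < u / c by positivity)
  rw [hsplit, Real.log_mul (by positivity) (by positivity), Real.log_mul (by positivity) hC.ne']
  calc a * (Real.log (a / (b * u * C)) + Real.log C + Real.log (u / c))
      ≤ a * ((a / (b * u * C) - 1) + Real.log C + (u / c - 1)) := by gcongr
    _ = _ := by ring

section ClassicalInformation

variable {ι κ : Type*} [Fintype ι] [Fintype κ]

def classicalMutualInfo (p : ι → κ → ℝ) : ℝ :=
  ∑ x, ∑ y, p x y * Real.log (p x y / ((∑ y', p x y') * ∑ x', p x' y))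

theorem classicalMutualInfo_le_log {p : ι → κ → ℝ} {u : κ → ℝ} {C : ℝ} (hC : 0 < C)
    (hp : ∀ x y, 0 ≤ p x y) (hp1 : ∑ x, ∑ y, p x y = 1) (hu : ∀ y, 0 < u y) (hu1 : ∑ y, u y = 1)
    (h : ∀ x, ∑ y, p x y ^ 2 / u y ≤ C * (∑ y, p x y) ^ 2) :
    classicalMutualInfo p ≤ Real.log C := by
  have hrow : ∀ x, ∑ y, p x y ^ 2 / ((∑ y', p x y') * u y * C) ≤ ∑ y, p x y := fun x => by
    have hP : 0 ≤ ∑ y, p x y := sum_nonneg fun y _ => hp x y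
    calc ∑ y, p x y ^ 2 / ((∑ y', p x y') * u y * C)
        = (∑ y, p x y ^ 2 / u y) / ((∑ y, p x y) * C) := by
          rw [sum_div]; exact sum_congr rfl fun y _ => by ring
      _ ≤ C * (∑ y, p x y) ^ 2 / ((∑ y, p x y) * C) := by gcongr; exact h x
      _ = ∑ y, p x y := by
          rcases hP.eq_or_lt with hP0 | hP0
          · simp [← hP0]
          · field_simp
  have hcol : ∑ x, ∑ y, p x y * u y / ∑ x', p x' y ≤ 1 := by
    rw [sum_comm, ← hu1]
    refine sum_le_sum fun y _ => ?_
    calc ∑ x, p x y * u y / ∑ x', p x' y = u y * ((∑ x, p x y) / ∑ x', p x' y) := by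
          rw [mul_div_assoc', mul_comm, sum_mul, sum_div]
      _ ≤ u y := mul_le_of_le_one_right (hu y).le (div_self_le_one _)
  calc classicalMutualInfo p
      ≤ ∑ x, ∑ y, (p x y * Real.log C + p x y ^ 2 / ((∑ y', p x y') * u y * C) - 2 * p x y
          + p x y * u y / ∑ x', p x' y) :=
        sum_le_sum fun x _ => sum_le_sum fun y _ => Real.mul_log_div_mul_le (hp x y)
          (single_le_sum (fun y _ => hp x y) (mem_univ y))
          (single_le_sum (fun x _ => hp x y) (mem_univ x)) (hu y) hC
    _ = (∑ x, ∑ y, p x y) * Real.log C + ∑ x, ∑ y, p x y ^ 2 / ((∑ y', p x y') * u y * C)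
          - 2 * ∑ x, ∑ y, p x y + ∑ x, ∑ y, p x y * u y / ∑ x', p x' y := by
        simp only [sum_add_distrib, sum_sub_distrib, ← sum_mul, ← mul_sum]
    _ ≤ Real.log C := by
        rw [hp1]
        linarith [sum_le_sum fun x (_ : x ∈ univ) => hrow x]

end ClassicalInformation

namespace Matrix.PosSemidef

variable {n : Type*} [Fintype n] {A B : Matrix n n ℂ}

-- `Tr(AB) = 1ᵀ (A ∘ Bᵀ) 1`, and `A ∘ Bᵀ ≥ 0` by the Schur product theorem.
lemma trace_mul_nonneg_s7 (hA : A.PosSemidef) (hB : B.PosSemidef) : 0 ≤ (A * B).trace := by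
  classical
  simpa [trace, mul_apply, dotProduct, mulVec, hadamard] using
    (hA.hadamard hB.transpose).dotProduct_mulVec_nonneg (fun _ => 1)

lemma re_trace_mul_self_le_sq (hA : A.PosSemidef) : (A * A).trace.re ≤ A.trace.re ^ 2 := by
  classical
  conv_lhs => rw [hA.1.spectral_theorem, ← map_mul, Unitary.conjStarAlgAut_apply, trace_mul_cycle,
    Unitary.coe_star_mul_self, one_mul, diagonal_mul_diagonal, trace_diagonal]
  rw [hA.1.trace_eq_sum_eigenvalues]
  simpa [← Complex.ofReal_mul, sq] using
    sum_sq_le_sq_sum_of_nonneg (s := univ) fun i _ => hA.eigenvalues_nonneg i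

lemma re_trace_pos (hA : A.PosSemidef) (hA0 : A ≠ 0) : 0 < A.trace.re :=
  (Complex.pos_iff.mp (hA.trace_nonneg.lt_of_ne (Ne.symm (hA.trace_eq_zero_iff.not.mpr hA0)))).1

end Matrix.PosSemidef

lemma Complex.ofReal_re_of_nonneg {z : ℂ} (hz : 0 ≤ z) : (z.re : ℂ) = z :=
  (Complex.eq_re_of_ofReal_le (r := 0) (by simpa using hz)).symm

theorem Fintype.sum_fin_two_arrow {α M : Type*} [Fintype α] [AddCommMonoid M] (F : α → α → M) :
    ∑ f : Fin 2 → α, F (f 0) (f 1) = ∑ a, ∑ b, F a b := by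
  rw [← (finTwoArrowEquiv α).symm.sum_comp]
  simp [Fintype.sum_prod_type]

section TensorSquare

variable {d : ℕ}

theorem matTensorPow_mul (A B : Matrix (Fin d) (Fin d) ℂ) (k : ℕ) :
    matTensorPow A k * matTensorPow B k = matTensorPow (A * B) k := by
  ext f g
  simp only [matTensorPow, mul_apply, of_apply, ← prod_mul_distrib]
  exact (Fintype.prod_sum fun i j => A (f i) j * B j (g i)).symm

theorem trace_matTensorPow (A : Matrix (Fin d) (Fin d) ℂ) (k : ℕ) :
    (matTensorPow A k).trace = A.trace ^ k := by
  simp only [trace, Matrix.diag, matTensorPow, of_apply]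
  rw [Fintype.sum_pow]

theorem trace_mul_permOperator {ι : Type*} [Fintype ι] [DecidableEq ι] {k : ℕ}
    (M : Matrix (Fin k → ι) (Fin k → ι) ℂ) (σ : Equiv.Perm (Fin k)) :
    (M * Matrix.of fun (f g : Fin k → ι) => if (∀ i, f (σ i) = g i) then (1 : ℂ) else 0).trace
      = ∑ g, M (g ∘ σ) g := by
  simp only [trace, Matrix.diag, mul_apply, of_apply, mul_ite, mul_one, mul_zero]
  rw [sum_comm]
  refine sum_congr rfl fun g _ => ?_
  have hiff : ∀ f : Fin k → ι, (∀ i, g (σ i) = f i) ↔ g ∘ σ = f := fun f => funext_iff.symm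
  simp only [hiff, sum_ite_eq, mem_univ, if_true]

theorem trace_matTensorPow_two_mul_symProj (A : Matrix (Fin d) (Fin d) ℂ) :
    (matTensorPow A 2 * symProj 2 d).trace = (A.trace ^ 2 + (A * A).trace) / 2 := by
  have hperm : (univ : Finset (Equiv.Perm (Fin 2))) = {1, Equiv.swap 0 1} := by decide
  have hswap : ∑ g : Fin 2 → Fin d, matTensorPow A 2 (g ∘ Equiv.swap 0 1) g = (A * A).trace := by
    simp only [matTensorPow, of_apply, Fin.prod_univ_two, Function.comp_apply,
      Equiv.swap_apply_left, Equiv.swap_apply_right]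
    rw [Fintype.sum_fin_two_arrow (fun a b => A b a * A a b), sum_comm]
    simp [trace, mul_apply]
  have hid : ∑ g : Fin 2 → Fin d, matTensorPow A 2 (g ∘ ⇑(1 : Equiv.Perm (Fin 2))) g
      = A.trace ^ 2 :=
    trace_matTensorPow A 2
  rw [symProj, Matrix.mul_smul, trace_smul, Matrix.mul_sum, trace_sum, hperm, sum_pair (by decide),
    trace_mul_permOperator, trace_mul_permOperator, hid, hswap, Nat.factorial_two, smul_eq_mul]
  ring

theorem IsTDesignPOVM.sum_trace_mul_sq_div_trace {t m : ℕ}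
    {π : Fin m → Matrix (Fin d) (Fin d) ℂ} (hπ : IsTDesignPOVM t π) (ht : 2 ≤ t) (hd : d ≠ 0)
    (A : Matrix (Fin d) (Fin d) ℂ) :
    ∑ y, (A * π y).trace ^ 2 / (π y).trace = (A.trace ^ 2 + (A * A).trace) / (d + 1) := by
  have h := congrArg (fun M => (matTensorPow A 2 * M).trace) (hπ.2.2 2 one_le_two ht)
  have hchoose : ((d - 1 + 2).choose 2 : ℂ) = d * (d + 1) / 2 := by
    rw [show d - 1 + 2 = d + 1 by omega, Nat.cast_choose_two]
    push_cast
    ring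
  simp only [Matrix.mul_smul, trace_smul, Matrix.mul_sum, trace_sum, matTensorPow_mul,
    trace_matTensorPow, trace_matTensorPow_two_mul_symProj, smul_eq_mul, hchoose,
    Nat.add_one_sub_one, pow_one] at h
  have hd' : (d : ℂ) ≠ 0 := Nat.cast_ne_zero.mpr hd
  simp only [div_eq_inv_mul (_ ^ 2)]
  rw [← mul_inv_cancel_left₀ hd' (∑ y, _), h]
  field_simp

theorem IsTDesignPOVM.sum_re_trace_mul_sq_div_le {t m : ℕ}
    {π : Fin m → Matrix (Fin d) (Fin d) ℂ} (hπ : IsTDesignPOVM t π) (ht : 2 ≤ t) (hd : d ≠ 0)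
    {A : Matrix (Fin d) (Fin d) ℂ} (hA : A.PosSemidef) :
    ∑ y, (A * π y).trace.re ^ 2 / ((π y).trace.re / d) ≤ 2 * d / (d + 1) * A.trace.re ^ 2 := by
  have hre : ∑ y, (A * π y).trace.re ^ 2 / (π y).trace.re
      = (A.trace.re ^ 2 + (A * A).trace.re) / (d + 1) := by
    apply Complex.ofReal_injective
    push_cast
    simp only [Complex.ofReal_re_of_nonneg (hA.trace_mul_nonneg_s7 (hπ.1.1 _)),
      Complex.ofReal_re_of_nonneg (hπ.1.1 _).trace_nonneg,
      Complex.ofReal_re_of_nonneg hA.trace_nonneg,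
      Complex.ofReal_re_of_nonneg (hA.trace_mul_nonneg_s7 hA)]
    exact hπ.sum_trace_mul_sq_div_trace ht hd A
  calc ∑ y, (A * π y).trace.re ^ 2 / ((π y).trace.re / d)
      = d * ∑ y, (A * π y).trace.re ^ 2 / (π y).trace.re := by
        rw [mul_sum]
        exact sum_congr rfl fun y _ => by rw [div_div_eq_mul_div]; ring
    _ = d * (A.trace.re ^ 2 + (A * A).trace.re) / (d + 1) := by rw [hre, mul_div_assoc]
    _ ≤ d * (A.trace.re ^ 2 + A.trace.re ^ 2) / (d + 1) := by
        gcongr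
        exact hA.re_trace_mul_self_le_sq
    _ = 2 * d / (d + 1) * A.trace.re ^ 2 := by ring

end TensorSquare

theorem Matrix.sum_re_trace_mul_eq {n : Type*} [Fintype n] [DecidableEq n] {m : ℕ}
    {π : Fin m → Matrix n n ℂ} (hπ : ∑ y, π y = 1) (A : Matrix n n ℂ) :
    ∑ y, (A * π y).trace.re = A.trace.re := by
  rw [← Complex.re_sum, ← trace_sum, ← Matrix.mul_sum, hπ, Matrix.mul_one]

theorem mutualInfo_eq_classicalMutualInfo {d n m : ℕ} (ρ : Fin n → Matrix (Fin d) (Fin d) ℂ)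
    {π : Fin m → Matrix (Fin d) (Fin d) ℂ} (hπ : ∑ y, π y = 1) :
    mutualInfo ρ π = classicalMutualInfo fun x y => (ρ x * π y).trace.re := by
  simp only [mutualInfo, classicalMutualInfo, sum_re_trace_mul_eq hπ]

theorem IsEnsemble.dim_ne_zero {d n : ℕ} {ρ : Fin n → Matrix (Fin d) (Fin d) ℂ}
    (hρ : IsEnsemble ρ) : d ≠ 0 := by
  rintro rfl
  simpa [trace_fin_zero] using hρ.2

theorem infoPower_twoDesign_le_general
    {d m : ℕ}
    (π : Fin m → Matrix (Fin d) (Fin d) ℂ) (hπ : IsTDesignPOVM 2 π) :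
    (∀ (n : ℕ) (ρ : Fin n → Matrix (Fin d) (Fin d) ℂ), IsEnsemble ρ →
      mutualInfo ρ π ≤ Real.log (2 * d / (d + 1)))
    ∧ infoPower π ≤ Real.log (2 * d / (d + 1)) := by
  have ⟨⟨hπ_psd, hπ_one⟩, hπ_ne, _⟩ := hπ
  have hI : ∀ (n : ℕ) (ρ : Fin n → Matrix (Fin d) (Fin d) ℂ), IsEnsemble ρ →
      mutualInfo ρ π ≤ Real.log (2 * d / (d + 1)) := by
    intro n ρ hρ
    have hd := hρ.dim_ne_zero
    have hd_pos : (0 : ℝ) < d := by positivity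
    rw [mutualInfo_eq_classicalMutualInfo ρ hπ_one]
    refine classicalMutualInfo_le_log (u := fun y => (π y).trace.re / d) (by positivity)
      (fun x y => (Complex.nonneg_iff.mp ((hρ.1 x).trace_mul_nonneg_s7 (hπ_psd y))).1) ?_
      (fun y => div_pos ((hπ_psd y).re_trace_pos (hπ_ne y)) hd_pos) ?_ fun x => ?_
    · simp only [sum_re_trace_mul_eq hπ_one, ← Complex.re_sum, hρ.2, Complex.one_re]
    · rw [← sum_div, div_eq_one_iff_eq hd_pos.ne']
      simpa using sum_re_trace_mul_eq hπ_one 1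
    · rw [sum_re_trace_mul_eq hπ_one]
      exact hπ.sum_re_trace_mul_sq_div_le le_rfl hd (hρ.1 x)
  refine ⟨hI, Real.sSup_le (fun w ⟨n, ρ, hρ, hw⟩ => hw ▸ hI n ρ hρ) ?_⟩
  rcases Nat.eq_zero_or_pos d with rfl | hd
  · simp
  · refine Real.log_nonneg ((le_div_iff₀ (by positivity)).mpr ?_)
    have : (1 : ℝ) ≤ d := by exact_mod_cast hd
    linarith

/-- for any `2`-design POVM on `ℂ^d`, every ensemble has
`I(ρ; π) ≤ W_2(d) = ln(2d/(d+1))`, hence `W(π) ≤ ln(2d/(d+1))`. -/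
theorem infoPower_twoDesign_le
    {d m : ℕ} (hd : 1 ≤ d)
    (π : Fin m → Matrix (Fin d) (Fin d) ℂ) (hπ : IsTDesignPOVM 2 π) :
    (∀ (n : ℕ) (ρ : Fin n → Matrix (Fin d) (Fin d) ℂ), IsEnsemble ρ →
      mutualInfo ρ π ≤ Real.log (2 * d / (d + 1)))
    ∧ infoPower π ≤ Real.log (2 * d / (d + 1)) :=
  infoPower_twoDesign_le_general π hπ
end
end

section
/- For every integer d ≥ 1, the double series ∑_{n=2}^∞ ∑_{k=0}^n ((n−2)! (−1)^k / (k! (n−k)!)) · binom(d−1+k, k)^{-1} converges, and its sum S satisfies ln d − d + 1 + d·S = ln d − ∑_{n=2}^d 1/n; equivalently, S = 1 − 1/d − (1/d) ∑_{n=2}^d 1/n. -/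
open MeasureTheory Matrix Finset Filter
open scoped ComplexOrder

noncomputable section

/-!
With `d = e + 1`, writing `1 / binom(e + k, k) = k! e! / (e + k)!` turns the inner sum for `n = m + 2`
into `m! e! / (m + e + 2)!` times the alternating partial sum `∑ₖ (-1)ᵏ binom(m + e + 2, m + 2 - k)`,
which is `binom(m + e + 1, m + 2)`. The `n`-th term is thus `e / (n (n - 1) (n + e))`
`= (1/(n-1) - 1/n) - (1/d) (1/(n-1) - 1/(n+e))`, and both differences telescope, leaving
`S = 1 - (1/d) ∑_{j=1}^{d} 1/j`.
-/

open Topology Nat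

theorem sum_range_neg_one_pow_mul_choose_sub {R : Type*} [CommRing R] (N n : ℕ) :
    ∑ k ∈ range (n + 1), (-1 : R) ^ k * (N + 1).choose (n - k) = N.choose n := by
  have hsign : ∀ j ∈ range (n + 1), (-1 : R) ^ (n - j) * (N + 1).choose j
      = (-1) ^ n * ((-1) ^ j * (N + 1).choose j) := by
    intro j hj
    have hjn : j ≤ n := Nat.lt_succ_iff.mp (mem_range.mp hj)
    rw [← mul_assoc, ← pow_add, ← Nat.sub_add_cancel hjn, pow_add, pow_add,
      mul_assoc ((-1 : R) ^ (n - j)), ← pow_add, Even.neg_one_pow ⟨j, rfl⟩, mul_one,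
      Nat.sub_add_cancel hjn]
  have halt : ∑ j ∈ range (n + 1), (-1 : R) ^ j * (N + 1).choose j = (-1) ^ n * N.choose n := by
    exact_mod_cast congrArg (Int.cast : ℤ → R) Int.alternating_sum_range_choose_eq_choose
  calc ∑ k ∈ range (n + 1), (-1 : R) ^ k * (N + 1).choose (n - k)
      = ∑ j ∈ range (n + 1), (-1 : R) ^ (n - j) * (N + 1).choose j := by
        rw [← sum_range_reflect]
        refine sum_congr rfl fun j hj => ?_
        rw [Nat.add_sub_cancel, Nat.sub_sub_self (Nat.lt_succ_iff.mp (mem_range.mp hj))]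
    _ = (-1) ^ n * ((-1) ^ n * N.choose n) := by rw [sum_congr rfl hsign, ← mul_sum, halt]
    _ = N.choose n := by rw [← mul_assoc, ← pow_add, Even.neg_one_pow ⟨n, rfl⟩, one_mul]

theorem tendsto_sum_range_sub_shift {G : Type*} [AddCommGroup G] [TopologicalSpace G]
    [IsTopologicalAddGroup G] {g : ℕ → G} (hg : Tendsto g atTop (𝓝 0)) (k : ℕ) :
    Tendsto (fun N => ∑ n ∈ range N, (g n - g (n + k))) atTop (𝓝 (∑ j ∈ range k, g j)) := by
  have hsplit : ∀ N, ∑ n ∈ range N, (g n - g (n + k))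
      = ∑ j ∈ range k, g j - ∑ j ∈ range k, g (N + j) := by
    intro N
    have h₁ := sum_range_add g N k
    have h₂ := sum_range_add g k N
    rw [add_comm k N] at h₂
    simp only [sum_sub_distrib, add_comm _ k]
    rw [eq_sub_iff_add_eq, sub_add_eq_add_sub, sub_eq_iff_eq_add, ← h₁, h₂, add_comm]
  have htail : Tendsto (fun N => ∑ j ∈ range k, g (N + j)) atTop (𝓝 0) := by
    simpa using tendsto_finsetSum (range k) fun j _ => hg.comp (tendsto_add_atTop_nat j)
  simpa [hsplit] using tendsto_const_nhds.sub htail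

theorem sum_Icc_two_eq_sum_range {M : Type*} [AddCommMonoid M] (f : ℕ → M) (N : ℕ) :
    ∑ n ∈ Icc 2 N, f n = ∑ m ∈ range (N - 1), f (m + 2) := by
  rw [← Ico_add_one_right_eq_Icc, sum_Ico_eq_sum_range, show N + 1 - 2 = N - 1 by omega]
  simp only [add_comm 2]

def subentropyTerm (d n : ℕ) : ℝ :=
  ∑ k ∈ range (n + 1),
    ((n - 2)! : ℝ) * (-1) ^ k / (k ! * (n - k)!) * ((Nat.choose (d - 1 + k) k : ℝ))⁻¹

theorem subentropyTerm_succ_add_two (e m : ℕ) :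
    subentropyTerm (e + 1) (m + 2) = e / ((m + 1) * (m + 2) * (m + e + 2)) := by
  have hterm : ∀ k ∈ range (m + 2 + 1),
      ((m + 2 - 2)! : ℝ) * (-1) ^ k / (k ! * (m + 2 - k)!)
          * ((Nat.choose (e + 1 - 1 + k) k : ℝ))⁻¹
        = (m ! * e ! / (m + e + 2)! : ℝ) * ((-1) ^ k * (m + e + 1 + 1).choose (m + 2 - k)) := by
    intro k hk
    have hkm : k ≤ m + 2 := Nat.lt_succ_iff.mp (mem_range.mp hk)
    rw [Nat.add_sub_cancel, Nat.add_sub_cancel, Nat.cast_choose ℝ (Nat.le_add_left k e),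
      Nat.cast_choose ℝ (show m + 2 - k ≤ m + e + 1 + 1 by omega), Nat.add_sub_cancel,
      show m + e + 1 + 1 - (m + 2 - k) = e + k by omega, show m + e + 1 + 1 = m + e + 2 by ring]
    field_simp
  have hchoose : ((m + e + 1).choose (m + 2) : ℝ) * (m + e + 2)
      = e * ((m + e + 2)! / ((m + 2)! * e !)) := by
    have h := Nat.choose_mul_succ_eq (m + e + 1) (m + 2)
    rw [show m + e + 1 + 1 - (m + 2) = e by omega, show m + e + 1 + 1 = m + 2 + e by ring] at h
    rw [show m + e + 2 = m + 2 + e by ring, ← Nat.cast_add_choose]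
    rify at h
    linear_combination h
  have hfac : ((m + 2)! : ℝ) = (m + 1) * (m + 2) * m ! := by
    rw [Nat.factorial_succ (m + 1), Nat.factorial_succ m]
    push_cast
    ring
  rw [subentropyTerm, sum_congr rfl hterm, ← mul_sum, sum_range_neg_one_pow_mul_choose_sub,
    eq_div_iff (by positivity)]
  calc _ = (m ! * e ! / (m + e + 2)! * (m + 1) * (m + 2) : ℝ)
        * ((m + e + 1).choose (m + 2) * (m + e + 2)) := by ring
    _ = e := by
      rw [hchoose, hfac]
      field_simp

theorem tendsto_sum_range_subentropyTerm (e : ℕ) :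
    Tendsto (fun M => ∑ m ∈ range M, subentropyTerm (e + 1) (m + 2)) atTop
      (𝓝 (1 - ((e : ℝ) + 1)⁻¹ * (1 + ∑ n ∈ Icc 2 (e + 1), (1 : ℝ) / n))) := by
  set g : ℕ → ℝ := fun n => 1 / (n + 1) with hg_def
  have hg : Tendsto g atTop (𝓝 0) := tendsto_one_div_add_atTop_nhds_zero_nat
  have hharmonic : ∑ j ∈ range (e + 1), g j = 1 + ∑ n ∈ Icc 2 (e + 1), (1 : ℝ) / n := by
    rw [sum_range_succ', sum_Icc_two_eq_sum_range, Nat.add_sub_cancel, add_comm]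
    simp [hg_def, add_assoc, one_add_one_eq_two]
  have hpartial : ∀ m, subentropyTerm (e + 1) (m + 2)
      = (g m - g (m + 1)) - ((e : ℝ) + 1)⁻¹ * (g m - g (m + (e + 1))) := by
    intro m
    rw [subentropyTerm_succ_add_two, hg_def]
    push_cast
    field_simp
    ring
  simp only [hpartial, sum_sub_distrib, ← mul_sum]
  rw [← hharmonic]
  simpa [g] using (tendsto_sum_range_sub_shift hg 1).sub
    ((tendsto_sum_range_sub_shift hg (e + 1)).const_mul ((e : ℝ) + 1)⁻¹)

/-- for every `d ≥ 1`, the double series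
`∑_{n=2}^∞ ∑_{k=0}^n ((n−2)! (−1)^k / (k!(n−k)!)) binom(d−1+k, k)⁻¹` converges, and its
sum `S` satisfies `ln d − d + 1 + d·S = ln d − ∑_{n=2}^d 1/n`, equivalently
`S = 1 − 1/d − (1/d) ∑_{n=2}^d 1/n`. -/
theorem subentropy_series
    (d : ℕ) (hd : 1 ≤ d) :
    ∃ S : ℝ,
      Filter.Tendsto
        (fun N => ∑ n ∈ Finset.Icc 2 N, ∑ k ∈ Finset.range (n + 1),
          (Nat.factorial (n - 2) : ℝ) * (-1) ^ k
              / (Nat.factorial k * Nat.factorial (n - k))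
            * ((Nat.choose (d - 1 + k) k : ℝ))⁻¹)
        Filter.atTop (nhds S)
      ∧ Real.log d - d + 1 + d * S = Real.log d - ∑ n ∈ Finset.Icc 2 d, (1 : ℝ) / n
      ∧ S = 1 - 1 / d - (1 / d) * ∑ n ∈ Finset.Icc 2 d, (1 : ℝ) / n := by
  obtain ⟨e, rfl⟩ : ∃ e, d = e + 1 := ⟨d - 1, by omega⟩
  refine ⟨1 - ((e : ℝ) + 1)⁻¹ * (1 + ∑ n ∈ Icc 2 (e + 1), (1 : ℝ) / n), ?_, ?_, ?_⟩
  · change Tendsto (fun N => ∑ n ∈ Icc 2 N, subentropyTerm (e + 1) n) atTop _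
    simp only [sum_Icc_two_eq_sum_range (subentropyTerm (e + 1))]
    exact (tendsto_sum_range_subentropyTerm e).comp (tendsto_sub_atTop_nat 1)
  · push_cast
    field_simp
    ring
  · push_cast
    field_simp
    ring
end
end
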